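/- arXiv:1806.04720 — 13 statements merged into one kernel-verified Lean document; each statement's English description precedes it below -/
import Mathlib

section
/- For all natural numbers i, M with 1 ≤ i ≤ M−1, if x_i ≥ 1 and x_{i+1} = x_i + 1 + ⌊√(x_i² + (M+1−i)² − 1)⌋, then √((x_{i+1} − x_i)² + 1) > √(x_i² + (M+1−i)²). -/
theorem stmt_0 (i M : ℕ) (hi : 1 ≤ i) (hiM : i ≤ M - 1)
    (x xnext : ℝ) (hx : 1 ≤ x)
    (hrec : xnext = x + 1 + ⌊Real.sqrt (x ^ 2 + ((M : ℝ) + 1 - i) ^ 2 - 1)⌋) :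
    Real.sqrt ((xnext - x) ^ 2 + 1) > Real.sqrt (x ^ 2 + ((M : ℝ) + 1 - i) ^ 2) := by
  have hM : i + 1 ≤ M := by omega
  have hk : (i : ℝ) + 1 ≤ M := by exact_mod_cast hM
  have hk2 : (2 : ℝ) ≤ (M : ℝ) + 1 - i := by linarith
  set A := x ^ 2 + ((M : ℝ) + 1 - i) ^ 2 - 1 with hAdef
  have hA : 0 ≤ A := by nlinarith
  set s := Real.sqrt A with hsdef
  have hs0 : 0 ≤ s := Real.sqrt_nonneg A
  have hs2 : s ^ 2 = A := Real.sq_sqrt hA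
  have hfl : s - 1 < (⌊s⌋ : ℝ) := Int.sub_one_lt_floor s
  have hdiff : xnext - x = 1 + (⌊s⌋ : ℝ) := by rw [hrec]; ring
  have hpos : s < xnext - x := by rw [hdiff]; linarith
  have hsq : s ^ 2 < (xnext - x) ^ 2 := by nlinarith
  apply Real.sqrt_lt_sqrt (by nlinarith)
  have : A < (xnext - x) ^ 2 := by linarith [hs2]
  linarith [this]
end

section
/- Let M ≥ 1 and define points in the plane r = (0,0) and p_i = (x_i, M+1−i) for i = 1,…,M, where x_1 = 1 and x_{i+1} = x_i + 1 + ⌊√(x_i² + (M+1−i)² − 1)⌋. Then for every i with 1 ≤ i ≤ M and every k ≥ 1 with i + k ≤ M, the Euclidean distance d(p_i, p_{i+k}) is strictly greater than d(p_i, r). -/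
/-- Euclidean distance in the plane. -/
noncomputable def dE (a b : ℝ × ℝ) : ℝ :=
  Real.sqrt ((a.1 - b.1) ^ 2 + (a.2 - b.2) ^ 2)

theorem stmt_1 (M : ℕ) (hM : 1 ≤ M) (x : ℕ → ℝ)
    (hx1 : x 1 = 1)
    (hrec : ∀ i, 1 ≤ i → i ≤ M - 1 →
      x (i + 1) = x i + 1 + ⌊Real.sqrt ((x i) ^ 2 + ((M : ℝ) + 1 - i) ^ 2 - 1)⌋)
    (r : ℝ × ℝ) (hr : r = (0, 0))
    (p : ℕ → ℝ × ℝ) (hp : ∀ i, 1 ≤ i → i ≤ M → p i = (x i, (M : ℝ) + 1 - i)) :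
    ∀ i k, 1 ≤ i → 1 ≤ k → i + k ≤ M → dE (p i) (p (i + k)) > dE (p i) r := by
  have hy : ∀ j : ℕ, j ≤ M → (1:ℝ) ≤ (M:ℝ) + 1 - j := by
    intro j h2
    have : (j:ℝ) ≤ M := by exact_mod_cast h2
    linarith
  have hstep : ∀ j, 1 ≤ j → j + 1 ≤ M →
      x j + 1 ≤ x (j+1) ∧ (x (j+1) - x j)^2 > (x j)^2 + ((M:ℝ)+1-j)^2 - 1 := by
    intro j h1 h2
    have hrecj := hrec j h1 (by omega)
    set t := Real.sqrt ((x j)^2 + ((M:ℝ)+1-j)^2 - 1) with ht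
    have harg : (0:ℝ) ≤ (x j)^2 + ((M:ℝ)+1-j)^2 - 1 := by
      have := hy j (by omega)
      nlinarith [sq_nonneg (x j)]
    have ht0 : 0 ≤ t := Real.sqrt_nonneg _
    have hfl : (0:ℝ) ≤ (⌊t⌋ : ℝ) := by exact_mod_cast Int.floor_nonneg.mpr ht0
    have hlt : t - 1 < (⌊t⌋:ℝ) := Int.sub_one_lt_floor t
    refine ⟨by rw [hrecj]; linarith, ?_⟩
    have hD : x (j+1) - x j = 1 + (⌊t⌋:ℝ) := by rw [hrecj]; ring
    have h1' : t < x (j+1) - x j := by rw [hD]; linarith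
    have hsq : t^2 < (x (j+1) - x j)^2 := by nlinarith
    rw [ht, Real.sq_sqrt harg] at hsq
    linarith
  have hmono : ∀ b a, 1 ≤ a → a ≤ b → b ≤ M → x a ≤ x b := by
    intro b
    induction b with
    | zero => intro a h1 hab _; omega
    | succ n ih =>
      intro a h1 hab hbM
      rcases Nat.lt_or_ge a (n+1) with h | h
      · have han : a ≤ n := by omega
        have h1n : 1 ≤ n := by omega
        have := (hstep n h1n hbM).1
        have := ih a h1 han (by omega)
        linarith
      · have : a = n + 1 := by omega
        rw [this]
  intro i k hi hk hik
  have hpi := hp i hi (by omega)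
  have hpik := hp (i+k) (by omega) hik
  rw [hpi, hpik, hr]
  unfold dE
  simp only
  have hyd : ((M:ℝ) + 1 - i) - ((M:ℝ) + 1 - (↑(i+k))) = (k:ℝ) := by
    push_cast; ring
  rw [hyd]
  have hs := hstep i hi (by omega)
  have hm : x (i+1) ≤ x (i+k) := hmono (i+k) (i+1) (by omega) (by omega) hik
  have hk1 : (1:ℝ) ≤ (k:ℝ) := by exact_mod_cast hk
  have hB : (0:ℝ) ≤ (x i - 0)^2 + ((M:ℝ) + 1 - i - 0)^2 := by positivity
  apply Real.sqrt_lt_sqrt hB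
  have h1 : x i + 1 ≤ x (i+1) := hs.1
  have h2 : (x (i+1) - x i)^2 > (x i)^2 + ((M:ℝ)+1-i)^2 - 1 := hs.2
  have h3 : (x (i+1) - x i)^2 ≤ (x (i+k) - x i)^2 := by nlinarith
  have h4 : (x i - x (i+k))^2 = (x (i+k) - x i)^2 := by ring
  nlinarith [sq_nonneg ((k:ℝ) - 1)]
end

section
/- For every natural number M there exists a set P of M+1 points in the plane with a distinguished root r of strictly smallest y-coordinate, all points having pairwise distinct y-coordinates, such that for each non-root point p ∈ P, the root r is the unique nearest point of P with y-coordinate strictly smaller than that of p. -/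
private lemma half_anti : StrictAnti (fun i : ℕ => ((2:ℝ)⁻¹) ^ i) :=
  fun _ _ h => pow_lt_pow_right_of_lt_one₀ (by norm_num) (by norm_num) h

theorem stmt_3 (M : ℕ) :
    ∃ (P : Finset (ℝ × ℝ)) (r : ℝ × ℝ),
      r ∈ P ∧ P.card = M + 1 ∧
      (∀ p ∈ P, p ≠ r → r.2 < p.2) ∧
      (∀ p ∈ P, ∀ q ∈ P, p ≠ q → p.2 ≠ q.2) ∧
      (∀ p ∈ P, p ≠ r → ∀ q ∈ P, q ≠ r → q.2 < p.2 → dE p r < dE p q) := by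
  classical
  set g : ℕ → ℝ × ℝ := fun i => ((3:ℝ) ^ i, ((2:ℝ)⁻¹) ^ i) with hg
  have hginj : Set.InjOn g (Finset.Icc 1 M) := by
    intro i _ j _ h
    exact half_anti.injective (congrArg Prod.snd h)
  have hpos : ∀ i : ℕ, (0:ℝ) < ((2:ℝ)⁻¹) ^ i := fun i => pow_pos (by norm_num) i
  have hroot : ((0:ℝ),(0:ℝ)) ∉ (Finset.Icc 1 M).image g := by
    simp only [Finset.mem_image, not_exists]
    rintro i ⟨_, h⟩
    exact absurd (congrArg Prod.snd h) (ne_of_gt (hpos i))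
  refine ⟨insert ((0:ℝ),(0:ℝ)) ((Finset.Icc 1 M).image g), ((0:ℝ),(0:ℝ)), Finset.mem_insert_self _ _, ?_, ?_, ?_, ?_⟩
  · rw [Finset.card_insert_of_notMem hroot, Finset.card_image_of_injOn hginj]
    simp
  · intro p hp hpr
    rcases Finset.mem_insert.mp hp with h | h
    · exact absurd h hpr
    · rcases Finset.mem_image.mp h with ⟨i, _, rfl⟩
      exact hpos i
  · intro p hp q hq hpq
    rcases Finset.mem_insert.mp hp with h | h
    · rcases Finset.mem_insert.mp hq with h' | h'
      · exact absurd (h.trans h'.symm) hpq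
      · rcases Finset.mem_image.mp h' with ⟨j, _, rfl⟩
        rw [h]; exact (ne_of_lt (hpos j))
    · rcases Finset.mem_image.mp h with ⟨i, _, rfl⟩
      rcases Finset.mem_insert.mp hq with h' | h'
      · rw [h']; exact (ne_of_gt (hpos i))
      · rcases Finset.mem_image.mp h' with ⟨j, _, rfl⟩
        intro hy
        exact hpq (congrArg g (half_anti.injective hy))
  · intro p hp hpr q hq hqr hlt
    rcases Finset.mem_insert.mp hp with h | h
    · exact absurd h hpr
    rcases Finset.mem_insert.mp hq with h' | h'
    · exact absurd h' hqr
    rcases Finset.mem_image.mp h with ⟨i, hi, rfl⟩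
    rcases Finset.mem_image.mp h' with ⟨j, hj, rfl⟩
    have hij : i < j := by
      by_contra hc
      exact absurd (half_anti.le_iff_ge.mpr (not_lt.mp hc)) (not_le.mpr hlt)
    have hi1 : 1 ≤ i := (Finset.mem_Icc.mp hi).1
    -- compare squared distances
    have h3 : (3:ℝ) ^ i * 3 ≤ (3:ℝ) ^ j := by
      calc (3:ℝ) ^ i * 3 = 3 ^ (i+1) := by ring
        _ ≤ 3 ^ j := pow_le_pow_right₀ (by norm_num) hij
    have hgap : (2:ℝ) * 3 ^ i ≤ 3 ^ j - 3 ^ i := by linarith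
    have h3pos : (0:ℝ) < 3 ^ i := pow_pos (by norm_num) i
    have hsq : ((3:ℝ)^i - 0)^2 + (((2:ℝ)⁻¹)^i - 0)^2
        < ((3:ℝ)^i - 3^j)^2 + (((2:ℝ)⁻¹)^i - ((2:ℝ)⁻¹)^j)^2 := by
      have h1 : ((2:ℝ)⁻¹)^i ≤ 1 := pow_le_one₀ (by norm_num) (by norm_num)
      have h2 : (1:ℝ) ≤ 3 ^ i := one_le_pow₀ (by norm_num)
      have hA : (((2:ℝ)⁻¹)^i - 0)^2 ≤ 1 := by
        rw [sub_zero]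
        nlinarith [hpos i]
      have hB : ((2:ℝ) * 3 ^ i)^2 ≤ ((3:ℝ)^i - 3^j)^2 := by
        rw [← neg_sub ((3:ℝ)^j)]
        rw [neg_pow]
        have : ((2:ℝ) * 3 ^ i)^2 ≤ ((3:ℝ)^j - 3^i)^2 := by
          apply pow_le_pow_left₀ (by positivity) hgap
        nlinarith [this]
      nlinarith [sq_nonneg (((2:ℝ)⁻¹)^i - ((2:ℝ)⁻¹)^j), sq_nonneg ((3:ℝ)^i)]
    unfold dE
    exact Real.sqrt_lt_sqrt (by positivity) hsq
end

section
/- Let p_1, …, p_{n+1} be points in the open first quadrant of ℝ² (all coordinates strictly positive) with strictly increasing x-coordinates x(p_1) < ⋯ < x(p_{n+1}), and suppose that for each i, the nearest point among {(0,0), p_1, …, p_{n+1}} with y-coordinate strictly smaller than y(p_i) is the origin (0,0). Then y(p_1) > y(p_2) > ⋯ > y(p_{n+1}). -/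
theorem stmt_4 (n : ℕ) (p : Fin (n + 1) → ℝ × ℝ)
    (hpos : ∀ i, 0 < (p i).1 ∧ 0 < (p i).2)
    (hy : ∀ i j, i ≠ j → (p i).2 ≠ (p j).2)
    (hxmono : ∀ i j, i < j → (p i).1 < (p j).1)
    (hnear : ∀ i j : Fin (n + 1), (p j).2 < (p i).2 →
      dE (p i) (0, 0) < dE (p i) (p j)) :
    ∀ i j, i < j → (p j).2 < (p i).2 := by
  intro i j hij
  rcases lt_or_gt_of_ne (hy i j (ne_of_lt hij)) with h | h
  · exfalso
    have hn := hnear j i h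
    have hx := hxmono i j hij
    have h1 := (hpos i).1
    have h2 := (hpos i).2
    have hlt : dE (p j) (p i) < dE (p j) (0, 0) := by
      unfold dE
      apply Real.sqrt_lt_sqrt
      · positivity
      · simp only []
        nlinarith
    linarith
  · exact h
end

section
/- Let p and p' be points in the first quadrant with the same x-coordinate x(p) = x(p') > 0 and 0 < y(p') ≤ y(p), and let r = (0,0). Then the portion of the closed disk centered at p' with radius d(p', r) that lies in the first quadrant is contained in the closed disk centered at p with radius d(p, r). -/
theorem stmt_5 (p p' : ℝ × ℝ) (hx : p.1 = p'.1) (hxpos : 0 < p.1)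
    (hy' : 0 < p'.2) (hyy : p'.2 ≤ p.2) :
    ∀ q : ℝ × ℝ, 0 ≤ q.1 → 0 ≤ q.2 →
      dE q p' ≤ dE p' (0, 0) → dE q p ≤ dE p (0, 0) := by
  intro q hq1 hq2 h
  unfold dE at *
  simp only at h ⊢
  rw [Real.sqrt_le_sqrt_iff (by positivity)] at h
  apply Real.sqrt_le_sqrt
  nlinarith [hx, hyy, hq2, mul_nonneg hq2 (sub_nonneg.mpr hyy)]
end

section
/- Let r = (0,0) and let p'_1, …, p'_{n+1} be points with y(p'_i) = n+1−i and x-coordinates satisfying 0 < x(p'_1) < x(p'_2) < ⋯ < x(p'_{n+1}), all integers, such that for each i with 1 ≤ i ≤ n, d(p'_{i+1}, p'_i) > d(p'_i, r), i.e. (x(p'_{i+1}) − x(p'_i))² + 1 ≥ x(p'_i)² + (n+1−i)². Then x(p'_{i+1}) ≥ 2·x(p'_i) for all 1 ≤ i ≤ n, and consequently x(p'_{n+1}) ≥ 2^{n-1}·x(p'_2). -/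
theorem stmt_6 (n : ℕ) (hn : 1 ≤ n) (x : ℕ → ℤ)
    (hx1 : 0 < x 1)
    (hmono : ∀ i, 1 ≤ i → i ≤ n → x i < x (i + 1))
    (hineq : ∀ i, 1 ≤ i → i ≤ n →
      (x (i + 1) - x i) ^ 2 + 1 ≥ (x i) ^ 2 + ((n : ℤ) + 1 - i) ^ 2) :
    (∀ i, 1 ≤ i → i ≤ n → x (i + 1) ≥ 2 * x i) ∧
    x (n + 1) ≥ 2 ^ (n - 1) * x 2 := by
  have hpos : ∀ i, 1 ≤ i → i ≤ n + 1 → 0 < x i := by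
    intro i h1 h2
    induction i with
    | zero => omega
    | succ j ih =>
      rcases Nat.eq_or_lt_of_le h1 with h | h
      · simpa [← h] using hx1
      · have hj1 : 1 ≤ j := by omega
        have hjn : j ≤ n := by omega
        exact lt_trans (ih hj1 (by omega)) (hmono j hj1 hjn)
  have key : ∀ i, 1 ≤ i → i ≤ n → x (i + 1) ≥ 2 * x i := by
    intro i h1 h2
    have hi := hineq i h1 h2
    have hone : (1 : ℤ) ≤ ((n : ℤ) + 1 - i) ^ 2 := by
      have : (1 : ℤ) ≤ (n : ℤ) + 1 - i := by
        have : (i : ℤ) ≤ n := by exact_mod_cast h2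
        linarith
      nlinarith
    have hsq : (x i) ^ 2 ≤ (x (i + 1) - x i) ^ 2 := by linarith
    have hxi : 0 < x i := hpos i h1 (by omega)
    have hd : 0 < x (i + 1) - x i := by
      have := hmono i h1 h2; linarith
    nlinarith [mul_pos (add_pos hd hxi) (add_pos hd hxi)]
  refine ⟨key, ?_⟩
  have main : ∀ k, k ≤ n - 1 → x (2 + k) ≥ 2 ^ k * x 2 := by
    intro k
    induction k with
    | zero => intro _; simp
    | succ m ih =>
      intro hm
      have hm' : m ≤ n - 1 := by omega
      have h1 : 1 ≤ 2 + m := by omega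
      have h2 : 2 + m ≤ n := by omega
      have := key (2 + m) h1 h2
      have hih := ih hm'
      calc x (2 + (m + 1)) = x (2 + m + 1) := by ring_nf
    _ ≥ 2 * x (2 + m) := this
    _ ≥ 2 * (2 ^ m * x 2) := by linarith
    _ = 2 ^ (m + 1) * x 2 := by ring
  have := main (n - 1) le_rfl
  have heq : 2 + (n - 1) = n + 1 := by omega
  rwa [heq] at this
end

section
/- Any grid drawing of the star K_{1,4n+4} as a rooted y-Monotone Minimum Spanning Tree (root at origin, every leaf connected only to the root, and the root is the unique nearest strictly-below point of every leaf) has width at least (n−1)·2^{n−1}; in particular the required grid area is exponential in n. -/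
/-- Euclidean distance between grid points. -/
noncomputable def dEZ (a b : ℤ × ℤ) : ℝ :=
  Real.sqrt (((a.1 - b.1 : ℤ) : ℝ) ^ 2 + ((a.2 - b.2 : ℤ) : ℝ) ^ 2)

private lemma chain_lemma {ι : Type*} [DecidableEq ι] (x y : ι → ℤ) :
    ∀ (k : ℕ) (T : Finset ι), T.card = k → T.Nonempty →
    (∀ i ∈ T, 0 < x i) →
    (∀ i ∈ T, ∀ j ∈ T, y i < y j → 2 * x j < x i) →
    (∀ i ∈ T, ∀ j ∈ T, y i = y j → i = j) →
    ∃ i ∈ T, (2:ℤ) ^ (k - 1) ≤ x i := by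
  intro k
  induction k with
  | zero =>
    intro T hcard hne _ _ _
    exact absurd (Finset.card_eq_zero.mp hcard) hne.ne_empty
  | succ k ih =>
    intro T hcard hne hpos hstep hyinj
    obtain ⟨i, hiT, hmin⟩ := T.exists_min_image y hne
    rcases Nat.eq_zero_or_pos k with hk | hk
    · refine ⟨i, hiT, ?_⟩
      simpa [hk] using (show (1:ℤ) ≤ x i from hpos i hiT)
    · set T' := T.erase i with hT'
      have hcard' : T'.card = k := by
        rw [hT', Finset.card_erase_of_mem hiT, hcard]; omega
      have hne' : T'.Nonempty := Finset.card_pos.mp (by omega)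
      obtain ⟨j, hjT', hj⟩ := ih T' hcard' hne'
        (fun a ha => hpos a (Finset.mem_of_mem_erase ha))
        (fun a ha b hb => hstep a (Finset.mem_of_mem_erase ha) b (Finset.mem_of_mem_erase hb))
        (fun a ha b hb => hyinj a (Finset.mem_of_mem_erase ha) b (Finset.mem_of_mem_erase hb))
      have hjT : j ∈ T := Finset.mem_of_mem_erase hjT'
      have hji : j ≠ i := Finset.ne_of_mem_erase hjT'
      have hij : y i < y j := by
        refine lt_of_le_of_ne (hmin j hjT) fun h => hji (hyinj j hjT i hiT h.symm)
      have h2 : 2 * x j < x i := hstep i hiT j hjT hij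
      refine ⟨i, hiT, ?_⟩
      have hpow : (2:ℤ) ^ (k + 1 - 1) = 2 * 2 ^ (k - 1) := by
        rw [show k + 1 - 1 = (k - 1) + 1 by omega, pow_succ]; ring
      rw [hpow]
      linarith
theorem stmt_9 (n : ℕ) (ℓ : Fin (4 * n + 4) → ℤ × ℤ)
    (hinj : Function.Injective ℓ)
    (hroot : ∀ i, ℓ i ≠ (0, 0))
    (hy : ∀ i j, i ≠ j → (ℓ i).2 ≠ (ℓ j).2)
    (hnear : ∀ i, (0 < (ℓ i).2) ∧
      ∀ j, (ℓ j).2 < (ℓ i).2 → dEZ (ℓ i) (0, 0) < dEZ (ℓ i) (ℓ j)) :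
    (Finset.univ.sup' Finset.univ_nonempty (fun i => (ℓ i).1) ⊔ 0) -
      (Finset.univ.inf' Finset.univ_nonempty (fun i => (ℓ i).1) ⊓ 0) ≥
      ((n : ℤ) - 1) * 2 ^ (n - 1) := by
  set X : Fin (4 * n + 4) → ℤ := fun i => (ℓ i).1 with hX
  set Y : Fin (4 * n + 4) → ℤ := fun i => (ℓ i).2 with hY
  -- Key inequality
  have K : ∀ i j, Y j < Y i → 2 * X i * X j < X j ^ 2 := by
    intro i j hij
    have h := (hnear i).2 j hij
    unfold dEZ at h
    have h2 : (((ℓ i).1 - (0:ℤ×ℤ).1 : ℤ) : ℝ) ^ 2 + (((ℓ i).2 - (0:ℤ×ℤ).2 : ℤ) : ℝ) ^ 2 <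
        (((ℓ i).1 - (ℓ j).1 : ℤ) : ℝ) ^ 2 + (((ℓ i).2 - (ℓ j).2 : ℤ) : ℝ) ^ 2 := by
      by_contra hc
      push_neg at hc
      exact absurd (Real.sqrt_le_sqrt hc) (not_le.mpr h)
    have h3 : ((ℓ i).1 - 0) ^ 2 + ((ℓ i).2 - 0) ^ 2 <
        ((ℓ i).1 - (ℓ j).1) ^ 2 + ((ℓ i).2 - (ℓ j).2) ^ 2 := by
      exact_mod_cast h2
    have hyj : 0 < (ℓ j).2 := (hnear j).1
    have hyi : (ℓ j).2 < (ℓ i).2 := hij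
    simp only [hX, hY]
    nlinarith [mul_le_mul_of_nonneg_right (by linarith : (ℓ j).2 + 1 ≤ (ℓ i).2)
      (by linarith : (0:ℤ) ≤ (ℓ j).2)]
  classical
  have hyinj : ∀ i j, Y i = Y j → i = j := by
    intro i j h
    by_contra hne
    exact hy i j hne h
  set A : Finset (Fin (4 * n + 4)) := Finset.univ.filter (fun i => 0 < X i) with hA
  set B : Finset (Fin (4 * n + 4)) := Finset.univ.filter (fun i => X i < 0) with hB
  set C : Finset (Fin (4 * n + 4)) := Finset.univ.filter (fun i => X i = 0) with hC
  have hCcard : C.card ≤ 1 := by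
    refine Finset.card_le_one.mpr fun a ha b hb => ?_
    simp only [hC, Finset.mem_filter] at ha hb
    by_contra hab
    rcases lt_trichotomy (Y a) (Y b) with h | h | h
    · have := K b a h; rw [ha.2, hb.2] at this; simp at this
    · exact hab (hyinj a b h)
    · have := K a b h; rw [ha.2, hb.2] at this; simp at this
  have hsum : A.card + B.card + C.card = 4 * n + 4 := by
    have hd1 : Disjoint A B := by
      rw [Finset.disjoint_left]
      intro a ha hb
      simp only [hA, hB, Finset.mem_filter] at ha hb
      omega
    have hd2 : Disjoint (A ∪ B) C := by
      rw [Finset.disjoint_left]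
      intro a ha hb
      simp only [hA, hB, hC, Finset.mem_union, Finset.mem_filter] at ha hb
      omega
    have hu : A ∪ B ∪ C = Finset.univ := by
      ext a
      simp only [hA, hB, hC, Finset.mem_union, Finset.mem_filter, Finset.mem_univ, true_and,
        iff_true]
      omega
    have := Finset.card_union_of_disjoint hd2
    rw [hu] at this
    rw [Finset.card_union_of_disjoint hd1] at this
    simp [Finset.card_univ] at this
    omega
  -- one of A, B has many elements
  have hbig : 2 * n + 2 ≤ A.card ∨ 2 * n + 2 ≤ B.card := by omega
  -- the width is at least 2^(2n+1) in either case
  have hW : (2:ℤ) ^ (2 * n + 1) ≤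
      (Finset.univ.sup' Finset.univ_nonempty (fun i => (ℓ i).1) ⊔ 0) -
      (Finset.univ.inf' Finset.univ_nonempty (fun i => (ℓ i).1) ⊓ 0) := by
    rcases hbig with hbig | hbig
    · obtain ⟨i, hiA, hi⟩ := chain_lemma X Y A.card A rfl
        (Finset.card_pos.mp (by omega))
        (fun a ha => (Finset.mem_filter.mp ha).2)
        (fun a ha b hb hab => by
          have := K b a hab
          have hxa : 0 < X a := (Finset.mem_filter.mp ha).2
          nlinarith)
        (fun a _ b _ h => hyinj a b h)
      have h1 : (2:ℤ) ^ (2 * n + 1) ≤ X i := by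
        refine le_trans ?_ hi
        apply pow_le_pow_right₀ (by norm_num)
        omega
      have h2 : X i ≤ Finset.univ.sup' Finset.univ_nonempty (fun i => (ℓ i).1) ⊔ 0 :=
        le_trans (Finset.le_sup' (fun i => (ℓ i).1) (Finset.mem_univ i)) le_sup_left
      have h3 : Finset.univ.inf' Finset.univ_nonempty (fun i => (ℓ i).1) ⊓ 0 ≤ 0 :=
        inf_le_right
      linarith
    · obtain ⟨i, hiB, hi⟩ := chain_lemma (fun i => -X i) Y B.card B rfl
        (Finset.card_pos.mp (by omega))
        (fun a ha => by
          have := (Finset.mem_filter.mp ha).2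
          show (0:ℤ) < -X a
          omega)
        (fun a ha b hb hab => by
          have := K b a hab
          have hxa : X a < 0 := (Finset.mem_filter.mp ha).2
          show 2 * (-X b) < -X a
          nlinarith)
        (fun a _ b _ h => hyinj a b h)
      have h1 : (2:ℤ) ^ (2 * n + 1) ≤ -X i := by
        refine le_trans ?_ hi
        apply pow_le_pow_right₀ (by norm_num)
        omega
      have h2 : (0:ℤ) ≤ Finset.univ.sup' Finset.univ_nonempty (fun i => (ℓ i).1) ⊔ 0 :=
        le_sup_right
      have h3 : Finset.univ.inf' Finset.univ_nonempty (fun i => (ℓ i).1) ⊓ 0 ≤ X i :=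
        le_trans inf_le_left (Finset.inf'_le (fun i => (ℓ i).1) (Finset.mem_univ i))
      linarith
  refine le_trans ?_ hW
  rcases Nat.eq_zero_or_pos n with hn | hn
  · subst hn; norm_num
  · have h1 : ((n:ℤ) - 1) ≤ 2 ^ (n + 2) := by
      have ha : (n:ℤ) < 2 ^ n := by exact_mod_cast (Nat.lt_two_pow_self (n := n))
      have hb : (2:ℤ) ^ n ≤ 2 ^ (n + 2) := pow_le_pow_right₀ (by norm_num) (by omega)
      linarith
    have h2 : (2:ℤ) ^ (2 * n + 1) = 2 ^ (n + 2) * 2 ^ (n - 1) := by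
      rw [← pow_add]; congr 1; omega
    have h3 : (0:ℤ) ≤ 2 ^ (n - 1) := by positivity
    rw [h2]
    exact mul_le_mul_of_nonneg_right h1 h3
end

section
/- Fix reals w, h ≥ 1 and points u, v with u in the axis-aligned box [a, a+w] × ℝ and v with x(v) ≥ a + w + 1 + ⌊√(w² + h² − 1)⌋ and |y(u) − y(v)| ≥ 1. If u' is another point in the same box with |y(u) − y(u')| and horizontal distance |x(u) − x(u')| ≤ w and |y(u) − y(u')| ≤ h, then d(u, v) > d(u, u'). -/
theorem stmt_13 (w h a : ℝ) (hw : 1 ≤ w) (hh : 1 ≤ h)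
    (u v u' : ℝ × ℝ)
    (hu : a ≤ u.1 ∧ u.1 ≤ a + w)
    (hv : v.1 ≥ a + w + 1 + ⌊Real.sqrt (w ^ 2 + h ^ 2 - 1)⌋)
    (hyv : 1 ≤ |u.2 - v.2|)
    (hu' : a ≤ u'.1 ∧ u'.1 ≤ a + w)
    (hx' : |u.1 - u'.1| ≤ w) (hy' : |u.2 - u'.2| ≤ h) :
    dE u v > dE u u' := by
  have hs : (0:ℝ) ≤ w ^ 2 + h ^ 2 - 1 := by nlinarith
  set s := Real.sqrt (w ^ 2 + h ^ 2 - 1) with hsdef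
  have hs0 : 0 ≤ s := Real.sqrt_nonneg _
  have hsq : s ^ 2 = w ^ 2 + h ^ 2 - 1 := Real.sq_sqrt hs
  have hfl : s < 1 + (⌊s⌋ : ℝ) := by
    have := Int.lt_floor_add_one s; linarith
  have hD : v.1 - u.1 > s := by
    have := hu.2; linarith [hv]
  have hD0 : (0:ℝ) ≤ v.1 - u.1 := le_of_lt (lt_of_le_of_lt hs0 hD)
  have h1 : (u.1 - v.1) ^ 2 + (u.2 - v.2) ^ 2 > (u.1 - u'.1) ^ 2 + (u.2 - u'.2) ^ 2 := by
    have h2 : (u.1 - v.1) ^ 2 > w ^ 2 + h ^ 2 - 1 := by nlinarith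
    have h3 : (u.2 - v.2) ^ 2 ≥ 1 := by nlinarith [sq_abs (u.2 - v.2)]
    have h4 : (u.1 - u'.1) ^ 2 ≤ w ^ 2 := by nlinarith [sq_abs (u.1 - u'.1), abs_nonneg (u.1 - u'.1)]
    have h5 : (u.2 - u'.2) ^ 2 ≤ h ^ 2 := by nlinarith [sq_abs (u.2 - u'.2), abs_nonneg (u.2 - u'.2)]
    linarith
  exact Real.sqrt_lt_sqrt (by positivity) h1
end

section
/- Every rooted tree T on n vertices admits a drawing on the integer grid such that: all vertices have pairwise distinct y-coordinates, the root has the strictly smallest y-coordinate, and for every non-root vertex u, the nearest drawn vertex with strictly smaller y-coordinate than u is exactly the parent of u in T. -/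
/-- Fueled x-coordinate: sums `(n+1)*4^(n-w)` over strict ancestors `w ≠ 0`. -/
def xc (n : ℕ) (par : Fin n → Fin n) : ℕ → Fin n → ℤ
  | 0, _ => 0
  | fuel+1, v => if v.val = 0 then 0 else xc n par fuel (par v) + (n+1 : ℤ) * 4 ^ (n - v.val)

section aux
variable {n : ℕ} {par : Fin n → Fin n}

lemma xc_irrel (hp : ∀ v : Fin n, v.val ≠ 0 → (par v).val < v.val) :
    ∀ (k f1 f2 : ℕ) (v : Fin n), v.val ≤ k → v.val ≤ f1 → v.val ≤ f2 →
    xc n par f1 v = xc n par f2 v := by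
  intro k
  induction k with
  | zero =>
      intro f1 f2 v hv h1 h2
      have hv0 : v.val = 0 := Nat.le_zero.mp hv
      cases f1 <;> cases f2 <;> simp [xc, hv0]
  | succ k ih =>
      intro f1 f2 v hv h1 h2
      by_cases hv0 : v.val = 0
      · cases f1 <;> cases f2 <;> simp [xc, hv0]
      · have h1' : 0 < f1 := lt_of_lt_of_le (Nat.pos_of_ne_zero hv0) h1
        have h2' : 0 < f2 := lt_of_lt_of_le (Nat.pos_of_ne_zero hv0) h2
        obtain ⟨a, rfl⟩ := Nat.exists_eq_succ_of_ne_zero h1'.ne'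
        obtain ⟨b, rfl⟩ := Nat.exists_eq_succ_of_ne_zero h2'.ne'
        have hpv := hp v hv0
        simp only [xc, if_neg hv0]
        have : xc n par a (par v) = xc n par b (par v) := by
          apply ih a b (par v) <;> omega
        rw [this]

/-- The actual x-coordinate. -/
def xcoord (par : Fin n → Fin n) (v : Fin n) : ℤ := xc n par v.val v

lemma xcoord_zero (v : Fin n) (hv : v.val = 0) : xcoord par v = 0 := by
  unfold xcoord
  rw [hv]
  rfl

lemma xcoord_step (hp : ∀ v : Fin n, v.val ≠ 0 → (par v).val < v.val)
    (v : Fin n) (hv : v.val ≠ 0) :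
    xcoord par v = xcoord par (par v) + (n+1 : ℤ) * 4 ^ (n - v.val) := by
  have hpv := hp v hv
  obtain ⟨a, ha⟩ : ∃ a, v.val = a + 1 := ⟨v.val - 1, by omega⟩
  have h1 : xcoord par v = xc n par (a+1) v := by unfold xcoord; rw [ha]
  rw [h1]
  simp only [xc, if_neg hv]
  congr 1
  exact xc_irrel hp a a (par v).val (par v) (by omega) (by omega) le_rfl

lemma xcoord_dvd (hp : ∀ v : Fin n, v.val ≠ 0 → (par v).val < v.val) :
    ∀ (k : ℕ) (v : Fin n), v.val ≤ k →
    ((n+1 : ℤ) * 4 ^ (n - v.val)) ∣ xcoord par v := by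
  intro k
  induction k with
  | zero =>
      intro v hv
      rw [xcoord_zero v (Nat.le_zero.mp hv)]
      exact dvd_zero _
  | succ k ih =>
      intro v hv
      by_cases hv0 : v.val = 0
      · rw [xcoord_zero v hv0]; exact dvd_zero _
      · rw [xcoord_step hp v hv0]
        apply dvd_add
        · have hpv := hp v hv0
          have h1 := ih (par v) (by omega)
          refine dvd_trans ?_ h1
          exact mul_dvd_mul_left _ (pow_dvd_pow 4 (by omega))
        · exact dvd_refl _

lemma xcoord_dvd' (hp : ∀ v : Fin n, v.val ≠ 0 → (par v).val < v.val)
    (v u : Fin n) (h : u.val < v.val) :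
    ((n+1 : ℤ) * 4 ^ (n - v.val + 1)) ∣ xcoord par u := by
  have h1 := xcoord_dvd hp u.val u (le_refl _)
  refine dvd_trans ?_ h1
  refine mul_dvd_mul_left _ (pow_dvd_pow 4 ?_)
  have := v.isLt
  omega

lemma xcoord_ne (hp : ∀ v : Fin n, v.val ≠ 0 → (par v).val < v.val)
    (u v : Fin n) (h : u.val < v.val) : xcoord par u ≠ xcoord par v := by
  intro heq
  have hv0 : v.val ≠ 0 := by omega
  have hstep := xcoord_step hp v hv0
  have hpv := hp v hv0
  have hdu : ((n+1 : ℤ) * 4 ^ (n - v.val + 1)) ∣ xcoord par u := xcoord_dvd' hp v u h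
  have hdp : ((n+1 : ℤ) * 4 ^ (n - v.val + 1)) ∣ xcoord par (par v) :=
    xcoord_dvd' hp v (par v) hpv
  have hdδ : ((n+1 : ℤ) * 4 ^ (n - v.val + 1)) ∣ ((n+1 : ℤ) * 4 ^ (n - v.val)) := by
    have heq2 : xcoord par u - xcoord par (par v) = (n+1 : ℤ) * 4 ^ (n - v.val) := by
      rw [heq, hstep]; ring
    rw [← heq2]
    exact dvd_sub hdu hdp
  have hδpos : (0 : ℤ) < (n+1 : ℤ) * 4 ^ (n - v.val) := by positivity
  have hle := Int.le_of_dvd hδpos hdδ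
  have h4 : ((n+1 : ℤ) * 4 ^ (n - v.val + 1)) = 4 * ((n+1 : ℤ) * 4 ^ (n - v.val)) := by
    rw [pow_succ]; ring
  nlinarith [hδpos]

/-- Key separation lemma. -/
lemma xcoord_key (hp : ∀ v : Fin n, v.val ≠ 0 → (par v).val < v.val)
    (v u : Fin n) (hv0 : v.val ≠ 0) (hu : u.val < v.val) (hne : u ≠ par v) :
    |xcoord par v - xcoord par u| ≥ |xcoord par v - xcoord par (par v)| + n := by
  have hpv := hp v hv0
  have hstep := xcoord_step hp v hv0
  set δ : ℤ := (n+1 : ℤ) * 4 ^ (n - v.val) with hδ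
  have hδpos : (0 : ℤ) < δ := by positivity
  set M : ℤ := (n+1 : ℤ) * 4 ^ (n - v.val + 1) with hM
  have hM4 : M = 4 * δ := by rw [hM, hδ, pow_succ]; ring
  have hdu : M ∣ xcoord par u := xcoord_dvd' hp v u hu
  have hdp : M ∣ xcoord par (par v) := xcoord_dvd' hp v (par v) hpv
  set c : ℤ := xcoord par (par v) - xcoord par u with hc
  have hdc : M ∣ c := dvd_sub hdp hdu
  have hcne : c ≠ 0 := by
    intro h0
    have heq : xcoord par (par v) = xcoord par u := by
      have : xcoord par (par v) - xcoord par u = 0 := h0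
      linarith
    rcases lt_trichotomy u.val (par v).val with h | h | h
    · exact xcoord_ne hp u (par v) h heq.symm
    · exact hne (Fin.ext h)
    · exact xcoord_ne hp (par v) u h heq
  have habs : M ≤ |c| := Int.le_of_dvd (abs_pos.mpr hcne) ((dvd_abs _ _).mpr hdc)
  have hvu : xcoord par v - xcoord par u = δ + c := by rw [hstep]; ring
  have hvp : xcoord par v - xcoord par (par v) = δ := by rw [hstep]; ring
  rw [hvu, hvp]
  have h1 : |c| ≤ |δ + c| + |δ| := by
    calc |c| = |(δ + c) + (-δ)| := by congr 1; ring
    _ ≤ |δ + c| + |(-δ)| := abs_add_le _ _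
    _ = |δ + c| + |δ| := by rw [abs_neg]
  have hδabs : |δ| = δ := abs_of_pos hδpos
  have hn4 : (n : ℤ) ≤ 2 * δ := by
    have h41 : (1:ℤ) ≤ (4:ℤ)^(n - v.val) := one_le_pow₀ (by norm_num)
    nlinarith
  rw [hδabs] at h1
  rw [hδabs]
  nlinarith [h1, habs, hM4]

end aux

/-- Every rooted tree (given by a parent function on `Fin n`, with root `0` and
`parent v < v` for non-root vertices) admits a grid drawing realizing it as a
rooted y-Monotone Minimum Spanning Tree. -/
theorem stmt_15 (n : ℕ) (hn : 0 < n) (par : Fin n → Fin n)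
    (hroot : par ⟨0, hn⟩ = ⟨0, hn⟩)
    (hpar : ∀ v : Fin n, v ≠ ⟨0, hn⟩ → par v < v) :
    ∃ D : Fin n → ℤ × ℤ,
      Function.Injective D ∧
      (∀ u v, u ≠ v → (D u).2 ≠ (D v).2) ∧
      (∀ v, v ≠ ⟨0, hn⟩ → (D ⟨0, hn⟩).2 < (D v).2) ∧
      (∀ v, v ≠ ⟨0, hn⟩ →
        (D (par v)).2 < (D v).2 ∧
        ∀ u, (D u).2 < (D v).2 → u ≠ par v →
          dEZ (D v) (D (par v)) < dEZ (D v) (D u)) := by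
  have hp : ∀ v : Fin n, v.val ≠ 0 → (par v).val < v.val := by
    intro v hv
    exact hpar v (by simp [Fin.ext_iff, hv])
  refine ⟨fun v => (xcoord par v, (v.val : ℤ)), ?_, ?_, ?_, ?_⟩
  · intro u v huv
    have h2 : (u.val : ℤ) = (v.val : ℤ) := congrArg Prod.snd huv
    exact Fin.ext (by exact_mod_cast h2)
  · intro u v huv
    show (u.val : ℤ) ≠ (v.val : ℤ)
    intro h
    exact huv (Fin.ext (by exact_mod_cast h))
  · intro v hv
    have hv0 : v.val ≠ 0 := fun h => hv (Fin.ext h)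
    show (((⟨0, hn⟩ : Fin n)).val : ℤ) < ((v.val : ℤ))
    simp only [Fin.val_mk, Nat.cast_zero]
    exact_mod_cast Nat.pos_of_ne_zero hv0
  · intro v hv
    have hv0 : v.val ≠ 0 := fun h => hv (Fin.ext h)
    have hpv := hp v hv0
    constructor
    · show (((par v).val : ℤ)) < ((v.val : ℤ))
      exact_mod_cast hpv
    · intro u hu hune
      have huv : u.val < v.val := by
        have : (u.val : ℤ) < (v.val : ℤ) := hu
        exact_mod_cast this
      have hkey := xcoord_key hp v u hv0 huv hune
      have hZ : (xcoord par v - xcoord par (par v))^2 + ((v.val : ℤ) - ((par v).val : ℤ))^2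
          < (xcoord par v - xcoord par u)^2 + ((v.val : ℤ) - (u.val : ℤ))^2 := by
        set a : ℤ := |xcoord par v - xcoord par (par v)| with ha
        set b : ℤ := |xcoord par v - xcoord par u| with hb
        have ha2 : (xcoord par v - xcoord par (par v))^2 = a^2 := (sq_abs _).symm
        have hb2 : (xcoord par v - xcoord par u)^2 = b^2 := (sq_abs _).symm
        rw [ha2, hb2]
        have hvp1 : (1 : ℤ) ≤ (v.val : ℤ) - ((par v).val : ℤ) := by
          have : ((par v).val : ℤ) < (v.val : ℤ) := by exact_mod_cast hpv
          omega
        have hvpn : ((v.val : ℤ) - ((par v).val : ℤ)) ≤ (n : ℤ) - 1 := by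
          have h1 : v.val < n := v.isLt
          have h2 : (0 : ℤ) ≤ ((par v).val : ℤ) := Int.natCast_nonneg _
          omega
        have hvu1 : (1 : ℤ) ≤ (v.val : ℤ) - (u.val : ℤ) := by
          have : (u.val : ℤ) < (v.val : ℤ) := by exact_mod_cast huv
          omega
        have hanneg : 0 ≤ a := abs_nonneg _
        have hbn : a + n ≤ b := hkey
        have hn1 : (1 : ℤ) ≤ (n : ℤ) := by exact_mod_cast hn
        nlinarith [sq_nonneg ((v.val : ℤ) - ((par v).val : ℤ))]
      show dEZ (xcoord par v, (v.val : ℤ)) (xcoord par (par v), ((par v).val : ℤ))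
          < dEZ (xcoord par v, (v.val : ℤ)) (xcoord par u, (u.val : ℤ))
      unfold dEZ
      apply Real.sqrt_lt_sqrt
      · positivity
      · push_cast
        exact_mod_cast hZ
end

section
/- Let x_1 = 1 and x_{i+1} = x_i + 1 + ⌊√(x_i² + (M+1−i)² − 1)⌋ for 1 ≤ i ≤ M−1, where M ≥ 2. Then x_{i+1} ≥ 2·x_i for every i, and hence x_M ≥ 2^{M−1}. -/
theorem stmt_16 (M : ℕ) (hM : 2 ≤ M) (x : ℕ → ℤ)
    (hx1 : x 1 = 1)
    (hrec : ∀ i, 1 ≤ i → i ≤ M - 1 →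
      x (i + 1) = x i + 1 +
        ⌊Real.sqrt (((x i : ℝ)) ^ 2 + ((M : ℝ) + 1 - i) ^ 2 - 1)⌋) :
    (∀ i, 1 ≤ i → i ≤ M - 1 → x (i + 1) ≥ 2 * x i) ∧
    x M ≥ 2 ^ (M - 1) := by
  have step : ∀ i, 1 ≤ i → i ≤ M - 1 → 1 ≤ x i → 2 * x i ≤ x (i + 1) := by
    intro i h1 h2 hxi
    rw [hrec i h1 h2]
    have hM2 : (2 : ℝ) ≤ (M : ℝ) + 1 - i := by
      have : i + 1 ≤ M := by omega
      have : (i : ℝ) + 1 ≤ (M : ℝ) := by exact_mod_cast this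
      linarith
    have hfloor : x i ≤ ⌊Real.sqrt (((x i : ℝ)) ^ 2 + ((M : ℝ) + 1 - i) ^ 2 - 1)⌋ := by
      rw [Int.le_floor]
      have hx0 : (0 : ℝ) ≤ (x i : ℝ) := by exact_mod_cast le_trans zero_le_one hxi
      rw [show (((x i : ℝ)) ^ 2 + ((M : ℝ) + 1 - i) ^ 2 - 1) =
        ((x i : ℝ)) ^ 2 + (((M : ℝ) + 1 - i) ^ 2 - 1) by ring]
      refine le_trans ?_ (Real.sqrt_le_sqrt (le_add_of_nonneg_right (by nlinarith)))
      rw [Real.sqrt_sq hx0]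
    linarith
  have main : ∀ i, 1 ≤ i → i ≤ M → (2 : ℤ) ^ (i - 1) ≤ x i := by
    intro i
    induction i with
    | zero => omega
    | succ n ih =>
      intro _ hle
      rcases Nat.eq_zero_or_pos n with h0 | hn
      · subst h0; simp [hx1]
      · have hnM : n ≤ M - 1 := by omega
        have hxn := ih hn (by omega)
        have h1p : (1 : ℤ) ≤ 2 ^ (n - 1) := by exact_mod_cast Nat.one_le_two_pow
        have hxpos : 1 ≤ x n := le_trans h1p hxn
        have hstep := step n hn hnM hxpos
        have hpow : (2 : ℤ) ^ (n + 1 - 1) = 2 * 2 ^ (n - 1) := by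
          rw [show n + 1 - 1 = (n - 1) + 1 from by omega, pow_succ]
          ring
        rw [hpow]
        have := mul_le_mul_of_nonneg_left hxn (by norm_num : (0:ℤ) ≤ 2)
        linarith
  refine ⟨fun i h1 h2 => step i h1 h2 ?_, main M (by omega) le_rfl⟩
  have h1p : (1 : ℤ) ≤ 2 ^ (i - 1) := by exact_mod_cast Nat.one_le_two_pow
  linarith [main i h1 (by omega : i ≤ M)]
end

section
/- Let r = (0,0) and let p_1, …, p_m be points with positive integer coordinates such that every p_i's nearest point strictly below it among {r, p_1, …, p_m} is r (nearest in Euclidean distance, 'below' meaning strictly smaller y-coordinate). Then the x-coordinates of p_1, …, p_m are pairwise distinct. -/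
theorem stmt_17 (m : ℕ) (p : Fin m → ℤ × ℤ)
    (hpos : ∀ i, 0 < (p i).1 ∧ 0 < (p i).2)
    (hy : ∀ i j, i ≠ j → (p i).2 ≠ (p j).2)
    (hnear : ∀ i j, (p j).2 < (p i).2 →
      dEZ (p i) (0, 0) < dEZ (p i) (p j)) :
    ∀ i j, i ≠ j → (p i).1 ≠ (p j).1 := by
  have key : ∀ i j : Fin m, (p j).2 < (p i).2 → (p i).1 = (p j).1 → False := by
    intro i j hlt hx
    have h1 := hnear i j hlt
    have hj : (0:ℝ) < ((p j).2 : ℝ) := by exact_mod_cast (hpos j).2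
    have hlt' : ((p j).2 : ℝ) < ((p i).2 : ℝ) := by exact_mod_cast hlt
    have hx1 : (0:ℝ) < ((p i).1 : ℝ) := by exact_mod_cast (hpos i).1
    have hd : dEZ (p i) (p j) < dEZ (p i) (0, 0) := by
      unfold dEZ
      apply Real.sqrt_lt_sqrt (by positivity)
      push_cast
      rw [hx]
      nlinarith
    linarith
  intro i j hij hx
  rcases lt_trichotomy (p i).2 (p j).2 with h | h | h
  · exact key j i h hx.symm
  · exact hy i j hij h
  · exact key i j h hx
end

section
/- Let p = (x, y) and p' = (x, y') with x > 0 and 0 < y' ≤ y, let r = (0,0), and let q = (x_q, y_q) be any point with x_q > x and y_q ≥ 0 such that d(p, q) > d(p, r). Then d(p', q) > d(p', r). -/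
theorem stmt_18 (x y y' : ℝ) (hx : 0 < x) (hy' : 0 < y') (hyy : y' ≤ y)
    (q : ℝ × ℝ) (hqx : x < q.1) (hqy : 0 ≤ q.2)
    (h : dE (x, y) q > dE (x, y) (0, 0)) :
    dE (x, y') q > dE (x, y') (0, 0) := by
  unfold dE at *
  simp only at *
  rw [show x - 0 = x by ring, show y - 0 = y by ring, show y' - 0 = y' by ring] at *
  have h' : x ^ 2 + y ^ 2 < (x - q.1) ^ 2 + (y - q.2) ^ 2 := by
    have := (Real.sqrt_lt_sqrt_iff (by positivity)).mp h
    linarith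
  apply Real.sqrt_lt_sqrt (by positivity)
  nlinarith [mul_le_mul_of_nonneg_right hyy hqy]
end

section
/- Let r = (0,0) and p'_i = (x_i, n+1−i) for i = 1, …, n+1 with positive integers x_1 < x_2 < ⋯ < x_{n+1} satisfying (x_{i+1} − x_i)² + 1 ≥ x_i² + (n+1−i)² for all 1 ≤ i ≤ n. Then x_2 ≥ n − 1 and x_{n+1} ≥ (n−1)·2^{n−1}. -/
theorem stmt_19 (n : ℕ) (hn : 1 ≤ n) (x : ℕ → ℤ)
    (hx1 : 0 < x 1)
    (hmono : ∀ i, 1 ≤ i → i ≤ n → x i < x (i + 1))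
    (hineq : ∀ i, 1 ≤ i → i ≤ n →
      (x (i + 1) - x i) ^ 2 + 1 ≥ (x i) ^ 2 + ((n : ℤ) + 1 - i) ^ 2) :
    x 2 ≥ (n : ℤ) - 1 ∧ x (n + 1) ≥ ((n : ℤ) - 1) * 2 ^ (n - 1) := by
  -- positivity of all x i for 1 ≤ i ≤ n+1
  have hpos : ∀ i, 1 ≤ i → i ≤ n + 1 → 0 < x i := by
    intro i
    induction i with
    | zero => omega
    | succ j ih =>
      intro _ hle
      rcases Nat.eq_or_lt_of_le (Nat.one_le_iff_ne_zero.mpr (by omega) : 1 ≤ j + 1) with h | h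
      · simpa [← h] using hx1
      · have hj1 : 1 ≤ j := by omega
        have hjn : j ≤ n := by omega
        exact lt_trans (ih hj1 (by omega)) (hmono j hj1 hjn)
  -- doubling
  have hdouble : ∀ i, 1 ≤ i → i ≤ n → x (i + 1) ≥ 2 * x i := by
    intro i h1 h2
    have hi := hineq i h1 h2
    have hp := hpos i h1 (by omega)
    have hm := hmono i h1 h2
    have hterm : ((n : ℤ) + 1 - i) ^ 2 ≥ 1 := by
      have : (1 : ℤ) ≤ (n : ℤ) + 1 - i := by
        have : (i : ℤ) ≤ n := by exact_mod_cast h2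
        linarith
      nlinarith
    nlinarith [sq_nonneg (x (i+1) - x i - x i), sq_nonneg (x (i+1) - x i + x i)]
  -- x 2 bound
  have hx2 : x 2 ≥ (n : ℤ) - 1 := by
    have hi := hineq 1 le_rfl hn
    have hm := hmono 1 le_rfl hn
    have hn' : (1 : ℤ) ≤ (n : ℤ) := by exact_mod_cast hn
    norm_num at hi hm
    have hge : x 2 - x 1 ≥ (n : ℤ) := by nlinarith
    linarith
  refine ⟨hx2, ?_⟩
  have key : ∀ k, k + 2 ≤ n + 1 → x (k + 2) ≥ x 2 * 2 ^ k := by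
    intro k
    induction k with
    | zero => intro _; simp
    | succ m ih =>
      intro hle
      have h1 : x (m + 2 + 1) ≥ 2 * x (m + 2) := hdouble (m + 2) (by omega) (by omega)
      have h2 := ih (by omega)
      have : x (m + 1 + 2) ≥ 2 * (x 2 * 2 ^ m) := by
        calc x (m + 1 + 2) = x (m + 2 + 1) := by ring_nf
        _ ≥ 2 * x (m + 2) := h1
        _ ≥ 2 * (x 2 * 2 ^ m) := by linarith
      calc x (m + 1 + 2) ≥ 2 * (x 2 * 2 ^ m) := this
      _ = x 2 * 2 ^ (m + 1) := by ring
  have hk := key (n - 1) (by omega)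
  have heq : n - 1 + 2 = n + 1 := by omega
  rw [heq] at hk
  have hpow : (0 : ℤ) < 2 ^ (n - 1) := by positivity
  nlinarith
end
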